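/- arXiv:2206.06861 — 7 statements merged into one kernel-verified Lean document; each statement's English description precedes it below -/
import Mathlib

section
/- Let A, B be polynomials over ℂ, let z₁, …, zₙ be pairwise distinct complex numbers with B(zⱼ) ≠ 0 for every j, and set P(X) = ∏_{j=1}^n (X − zⱼ). If there exists a polynomial Q over ℂ such that B·P'' − A·P' − Q·P = 0 (identity of polynomials), then the points satisfy the Stieltjes–Bethe equations: for every j = 1, …, n, Σ_{ℓ ≠ j} 1/(zⱼ − z_ℓ) = A(zⱼ)/(2·B(zⱼ)). -/
/-!
Fix a node `zⱼ` and write `P = (X - zⱼ) R` with `R = ∏_{ℓ ≠ j} (X - z_ℓ)`. Then `P'(zⱼ) = R(zⱼ)` and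
`P''(zⱼ) = 2 R'(zⱼ)`, so evaluating `B P'' - A P' - Q P = 0` at the root `zⱼ` of `P` gives
`2 B(zⱼ) R'(zⱼ) = A(zⱼ) R(zⱼ)`. Since the nodes are distinct, `R(zⱼ) ≠ 0`, and the logarithmic
derivative `R'(zⱼ) / R(zⱼ)` is `∑_{ℓ ≠ j} 1 / (zⱼ - z_ℓ)`.
-/

open Polynomial Finset

namespace Polynomial

section CommRing

variable {R : Type*} [CommRing R]

theorem eval_derivative_X_sub_C_mul_self (a : R) (p : R[X]) :
    eval a (derivative ((X - C a) * p)) = eval a p := by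
  simp [derivative_mul]

theorem eval_derivative_derivative_X_sub_C_mul_self (a : R) (p : R[X]) :
    eval a (derivative (derivative ((X - C a) * p))) = 2 * eval a (derivative p) := by
  simp only [derivative_mul, derivative_X_sub_C, one_mul, zero_mul, derivative_add,
    eval_add, eval_mul, eval_sub, eval_X, eval_C, sub_self]
  ring

theorem eval_eq_of_heine_stieltjes {A B Q P : R[X]}
    (hQ : B * derivative (derivative P) - A * derivative P - Q * P = 0) {x : R}
    (hx : P.IsRoot x) :
    B.eval x * (derivative (derivative P)).eval x = A.eval x * (derivative P).eval x := by
  have := congrArg (eval x) hQ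
  simp only [eval_sub, eval_mul, hx.eq_zero, mul_zero, sub_zero, eval_zero] at this
  exact sub_eq_zero.mp this

end CommRing

section Field

variable {K ι : Type*} [Field K]

theorem eval_derivative_prod_X_sub_C [DecidableEq ι] (s : Finset ι) (z : ι → K) {x : K}
    (hx : ∀ i ∈ s, x ≠ z i) :
    eval x (derivative (∏ i ∈ s, (X - C (z i)))) =
      eval x (∏ i ∈ s, (X - C (z i))) * ∑ i ∈ s, 1 / (x - z i) := by
  simp only [derivative_prod_finset, derivative_X_sub_C, mul_one, eval_finsetSum, eval_prod,
    eval_sub, eval_X, eval_C, mul_sum]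
  refine sum_congr rfl fun i hi ↦ ?_
  rw [← mul_prod_erase s _ hi, mul_one_div, mul_div_cancel_left₀ _ (sub_ne_zero.mpr (hx i hi))]

theorem sum_one_div_sub_eq_of_heine_stieltjes [NeZero (2 : K)] [Fintype ι] [DecidableEq ι]
    {z : ι → K} (hz : Function.Injective z) {A B Q : K[X]}
    (hQ : B * derivative (derivative (∏ i, (X - C (z i)))) -
      A * derivative (∏ i, (X - C (z i))) - Q * ∏ i, (X - C (z i)) = 0)
    {j : ι} (hB : B.eval (z j) ≠ 0) :
    ∑ ℓ ∈ univ.erase j, 1 / (z j - z ℓ) = A.eval (z j) / (2 * B.eval (z j)) := by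
  set R := ∏ ℓ ∈ univ.erase j, (X - C (z ℓ))
  have hsplit : ∏ i, (X - C (z i)) = (X - C (z j)) * R := (mul_prod_erase _ _ (mem_univ j)).symm
  have hne : ∀ ℓ ∈ univ.erase j, z j ≠ z ℓ := fun ℓ hℓ h ↦ (ne_of_mem_erase hℓ) (hz h).symm
  have hR : R.eval (z j) ≠ 0 := by
    simp only [R, eval_prod, eval_sub, eval_X, eval_C]
    exact prod_ne_zero_iff.mpr fun ℓ hℓ ↦ sub_ne_zero.mpr (hne ℓ hℓ)
  have hroot : ((X - C (z j)) * R).IsRoot (z j) := by simp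
  rw [hsplit] at hQ
  have key := eval_eq_of_heine_stieltjes hQ hroot
  rw [eval_derivative_derivative_X_sub_C_mul_self, eval_derivative_X_sub_C_mul_self,
    eval_derivative_prod_X_sub_C _ _ hne] at key
  rw [eq_div_iff (mul_ne_zero two_ne_zero hB)]
  apply mul_left_cancel₀ hR
  linear_combination key

end Field

end Polynomial

/-- If `P = ∏ (X - zⱼ)` with pairwise distinct `zⱼ` (not roots of `B`)
satisfies a generalized Heine–Stieltjes equation `B·P'' − A·P' − Q·P = 0` for some
polynomial `Q`, then the points satisfy the Stieltjes–Bethe equations. -/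
theorem stieltjes_bethe_of_heine_stieltjes
    (A B : Polynomial ℂ) (n : ℕ) (z : Fin n → ℂ)
    (hz : Function.Injective z) (hB : ∀ j, B.eval (z j) ≠ 0)
    (P : Polynomial ℂ) (hP : P = ∏ j, (X - C (z j)))
    (hQ : ∃ Q : Polynomial ℂ,
      B * derivative (derivative P) - A * derivative P - Q * P = 0) :
    ∀ j, ∑ ℓ ∈ univ.erase j, 1 / (z j - z ℓ) = A.eval (z j) / (2 * B.eval (z j)) := by
  intro j
  obtain ⟨Q, hQ⟩ := hQ
  subst hP
  exact sum_one_div_sub_eq_of_heine_stieltjes hz hQ (hB j)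
end

section
/- Let A, B, Q, P be polynomials over ℂ with P satisfying the generalized Heine–Stieltjes equation B·P'' − A·P' − Q·P = 0. Suppose c ∈ ℂ is a common root of B and P, i.e. B(c) = 0 and P(c) = 0, and suppose that A(c) − k·B'(c) ≠ 0 for every natural number k = 0, 1, 2, …. Then P is the zero polynomial. -/
/-!
Let `m = n + 1` be the multiplicity of `c` as a root of `P`, so `P = (X - c)^m F` with `F(c) ≠ 0`,
and write `B = (X - c) B₁`. Factoring `(X - c)^n` out of `B P'' - A P' - Q P` and evaluating the
cofactor at `c` gives the indicial equation `m F(c) (n B'(c) - A(c)) = 0`, i.e. `A(c) = n B'(c)`.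
-/

open Polynomial

namespace Polynomial

variable {R : Type*}

theorem X_sub_C_mul_derivative_X_sub_C_pow_mul [CommRing R] (c : R) (n : ℕ) (T : R[X]) :
    (X - C c) * derivative ((X - C c) ^ n * T) =
      (X - C c) ^ n * (C (n : R) * T + (X - C c) * derivative T) := by
  rw [derivative_mul, derivative_X_sub_C_pow]
  rcases n with _ | n
  · simp
  · rw [Nat.add_sub_cancel]
    ring

theorem derivative_X_sub_C_pow_succ_mul [CommRing R] (c : R) (n : ℕ) (F : R[X]) :
    derivative ((X - C c) ^ (n + 1) * F) =
      (X - C c) ^ n * (C ((n : R) + 1) * F + (X - C c) * derivative F) := by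
  rw [derivative_mul, derivative_X_sub_C_pow, Nat.add_sub_cancel]
  push_cast
  ring

theorem eval_eq_natCast_mul_eval_derivative_of_heineStieltjes
    [CommRing R] [IsDomain R] [CharZero R] {A B Q F : R[X]} {c : R} {n : ℕ}
    (hODE : B * derivative (derivative ((X - C c) ^ (n + 1) * F)) -
      A * derivative ((X - C c) ^ (n + 1) * F) - Q * ((X - C c) ^ (n + 1) * F) = 0)
    (hBc : B.eval c = 0) (hFc : F.eval c ≠ 0) :
    A.eval c = n * (derivative B).eval c := by
  obtain ⟨B₁, rfl⟩ : X - C c ∣ B := dvd_iff_isRoot.mpr hBc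
  set T := C ((n : R) + 1) * F + (X - C c) * derivative F
  have hfactor : (X - C c) ^ n *
      (B₁ * (C (n : R) * T + (X - C c) * derivative T) - A * T - Q * ((X - C c) * F)) = 0 := by
    rw [← hODE, derivative_X_sub_C_pow_succ_mul, mul_assoc (X - C c), mul_left_comm (X - C c),
      X_sub_C_mul_derivative_X_sub_C_pow_mul]
    ring
  have hcofactor := (mul_eq_zero.mp hfactor).resolve_left (pow_ne_zero _ (X_sub_C_ne_zero c))
  have hTc : T.eval c = ((n : R) + 1) * F.eval c := by simp [T]
  have hindicial : T.eval c * (n * B₁.eval c - A.eval c) = 0 := by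
    have := congrArg (eval c) hcofactor
    simp only [eval_sub, eval_mul, eval_add, eval_C, eval_X, sub_self, zero_mul, add_zero,
      mul_zero, sub_zero, eval_zero] at this
    linear_combination this
  have hTc_ne : T.eval c ≠ 0 := hTc ▸ mul_ne_zero (Nat.cast_add_one_ne_zero n) hFc
  have hB₁ : (derivative ((X - C c) * B₁)).eval c = B₁.eval c := by
    simp [derivative_mul]
  rw [hB₁]
  linear_combination -(mul_eq_zero.mp hindicial).resolve_left hTc_ne

end Polynomial

/-- If `P` satisfies the generalized Heine–Stieltjes equation
`B·P'' − A·P' − Q·P = 0`, and `c` is a common root of `B` and `P` at which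
`A(c) − k·B'(c) ≠ 0` for every natural number `k`, then `P` is the zero polynomial. -/
theorem zero_of_shared_root_heine_stieltjes
    (A B Q P : Polynomial ℂ)
    (hODE : B * derivative (derivative P) - A * derivative P - Q * P = 0)
    (c : ℂ) (hBc : B.eval c = 0) (hPc : P.eval c = 0)
    (hgen : ∀ k : ℕ, A.eval c - (k : ℂ) * (derivative B).eval c ≠ 0) :
    P = 0 := by
  by_contra hP
  obtain ⟨F, hPF, hF⟩ := P.exists_eq_pow_rootMultiplicity_mul_and_not_dvd hP c
  obtain ⟨n, hn⟩ := Nat.exists_eq_add_one.mpr ((rootMultiplicity_pos hP).mpr hPc)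
  rw [hn] at hPF
  subst hPF
  have hFc : F.eval c ≠ 0 := fun h ↦ hF (dvd_iff_isRoot.mpr h)
  exact hgen n (sub_eq_zero.mpr
    (eval_eq_natCast_mul_eval_derivative_of_heineStieltjes hODE hBc hFc))
end

section
/- Let μ : ℕ → ℂ be a sequence of moments and n ≥ 1. If D_{n,0} = det(μ_{i+j})_{0≤i,j≤n−1} = 0 and D_{n+1,0} = det(μ_{i+j})_{0≤i,j≤n} = 0, then the polynomial P_n(z), defined as the determinant of the (n+1)×(n+1) matrix whose rows with index 0 ≤ i ≤ n−1 are (μ_i, μ_{i+1}, …, μ_{i+n}) and whose last row is (1, z, …, z^n), is the identically zero polynomial. -/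
/-!
Let `c` be a nonzero kernel vector of the singular Hankel matrix `H = (μ_{i+j})_{0 ≤ i,j ≤ n}`.
If `c_n = 0`, then, `H` being symmetric, `c` is a linear relation among the first `n` rows of the
matrix defining `P_n`. Otherwise pad a nonzero kernel vector of the `n × n` Hankel matrix by `0`
to get `d`. Both `c` and `d` are killed by the first `n` rows, and the last row sends them to
their generating polynomials `p_c, p_d`; hence `p_d • c - p_c • d` is a kernel vector over
`ℂ[X]`, nonzero since its last entry is `c_n p_d`.
-/

open Polynomial Matrix

theorem Matrix.mulVec_smul_sub_smul_eq_zero {R m n : Type*} [CommRing R] [Fintype n]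
    {M : Matrix m n R} {i₀ : m} {u w : n → R}
    (hu : ∀ i ≠ i₀, (M *ᵥ u) i = 0) (hw : ∀ i ≠ i₀, (M *ᵥ w) i = 0) :
    M *ᵥ ((M *ᵥ w) i₀ • u - (M *ᵥ u) i₀ • w) = 0 := by
  ext i
  simp only [mulVec_sub, mulVec_smul, Pi.sub_apply, Pi.smul_apply, smul_eq_mul, Pi.zero_apply]
  by_cases hi : i = i₀
  · subst hi
    ring
  · rw [hu i hi, hw i hi, mul_zero, mul_zero, sub_zero]

theorem Polynomial.sum_fin_C_mul_X_pow_ne_zero {R : Type*} [Semiring R] {m : ℕ} {v : Fin m → R}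
    (hv : v ≠ 0) : ∑ i : Fin m, C (v i) * X ^ (i : ℕ) ≠ 0 := by
  classical
  simpa [ofFn_eq_sum_monomial, C_mul_X_pow_eq_monomial] using
    ((injective_ofFn m).ne_iff' (ofFn_zero m)).mpr hv

def hankel {α : Type*} (μ : ℕ → α) (m : ℕ) : Matrix (Fin m) (Fin m) α :=
  of fun i j => μ (i + j)

theorem hankel_transpose {α : Type*} (μ : ℕ → α) (m : ℕ) : (hankel μ m)ᵀ = hankel μ m := by
  ext i j
  simp [hankel, add_comm]

section Hankel

variable {R : Type*} [CommRing R]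

theorem hankel_mulVec_snoc_zero (μ : ℕ → R) {n : ℕ} (d : Fin n → R) (i : Fin n) :
    (hankel μ (n + 1) *ᵥ Fin.snoc d 0) i.castSucc = (hankel μ n *ᵥ d) i := by
  simp [mulVec, dotProduct, Fin.sum_univ_castSucc, hankel]

noncomputable def hankelPolyMatrix (μ : ℕ → R) (n : ℕ) :
    Matrix (Fin (n + 1)) (Fin (n + 1)) R[X] :=
  of fun i j => if (i : ℕ) < n then C (μ (i + j)) else X ^ (j : ℕ)

theorem hankelPolyMatrix_mulVec_C_comp_of_ne_last (μ : ℕ → R) {n : ℕ} (v : Fin (n + 1) → R)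
    {i : Fin (n + 1)} (hi : i ≠ Fin.last n) :
    (hankelPolyMatrix μ n *ᵥ (C ∘ v)) i = C ((hankel μ (n + 1) *ᵥ v) i) := by
  simp [hankelPolyMatrix, hankel, mulVec, dotProduct, Fin.val_lt_last hi]

theorem hankelPolyMatrix_mulVec_C_comp_last (μ : ℕ → R) {n : ℕ} (v : Fin (n + 1) → R) :
    (hankelPolyMatrix μ n *ᵥ (C ∘ v)) (Fin.last n) = ∑ j, C (v j) * X ^ (j : ℕ) := by
  simp only [hankelPolyMatrix, mulVec, dotProduct, of_apply, Fin.val_last, lt_irrefl, if_false,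
    Function.comp_apply]
  exact Finset.sum_congr rfl fun j _ => mul_comm _ _

theorem C_comp_vecMul_hankelPolyMatrix (μ : ℕ → R) {n : ℕ} {c : Fin (n + 1) → R}
    (hc : c (Fin.last n) = 0) :
    (C ∘ c) ᵥ* hankelPolyMatrix μ n = C ∘ (c ᵥ* hankel μ (n + 1)) := by
  ext j : 1
  simp only [vecMul, dotProduct, Fin.sum_univ_castSucc, Function.comp_apply, hc, map_zero,
    zero_mul, add_zero, map_sum, map_mul]
  refine Finset.sum_congr rfl fun i _ => ?_
  simp [hankelPolyMatrix, hankel]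

variable [IsDomain R]

theorem det_hankelPolyMatrix_eq_zero_of_mulVec_eq_zero_of_last_eq_zero (μ : ℕ → R) {n : ℕ}
    {c : Fin (n + 1) → R} (hc0 : c ≠ 0) (hc : hankel μ (n + 1) *ᵥ c = 0)
    (hcn : c (Fin.last n) = 0) : (hankelPolyMatrix μ n).det = 0 := by
  refine exists_vecMul_eq_zero_iff.mp ⟨C ∘ c, ?_, ?_⟩
  · exact fun h => hc0 (funext fun i => C_injective (by simpa using congrFun h i))
  · rw [C_comp_vecMul_hankelPolyMatrix μ hcn, ← mulVec_transpose, hankel_transpose, hc]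
    ext
    simp

theorem det_hankelPolyMatrix_eq_zero_of_mulVec_eq_zero_of_last_ne_zero (μ : ℕ → R) {n : ℕ}
    {c : Fin (n + 1) → R} (hc : hankel μ (n + 1) *ᵥ c = 0) (hcn : c (Fin.last n) ≠ 0)
    {d : Fin n → R} (hd0 : d ≠ 0) (hd : hankel μ n *ᵥ d = 0) :
    (hankelPolyMatrix μ n).det = 0 := by
  have hu : ∀ i ≠ Fin.last n, (hankelPolyMatrix μ n *ᵥ (C ∘ c)) i = 0 := fun i hi => by
    rw [hankelPolyMatrix_mulVec_C_comp_of_ne_last μ c hi, hc, Pi.zero_apply, map_zero]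
  have hw : ∀ i ≠ Fin.last n, (hankelPolyMatrix μ n *ᵥ (C ∘ Fin.snoc d 0)) i = 0 :=
    fun i hi => by
      obtain ⟨i, rfl⟩ := Fin.exists_castSucc_eq.mpr hi
      rw [hankelPolyMatrix_mulVec_C_comp_of_ne_last μ _ hi, hankel_mulVec_snoc_zero, hd,
        Pi.zero_apply, map_zero]
  have hsnoc0 : (Fin.snoc d 0 : Fin (n + 1) → R) ≠ 0 := fun h =>
    hd0 (funext fun i => by simpa using congrFun h i.castSucc)
  refine exists_mulVec_eq_zero_iff.mp ⟨_, fun h => ?_, mulVec_smul_sub_smul_eq_zero hu hw⟩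
  have hlast := congrFun h (Fin.last n)
  rw [hankelPolyMatrix_mulVec_C_comp_last] at hlast
  simp only [Pi.sub_apply, Pi.smul_apply, Function.comp_apply, smul_eq_mul, Fin.snoc_last,
    map_zero, mul_zero, sub_zero, Pi.zero_apply] at hlast
  exact mul_ne_zero (sum_fin_C_mul_X_pow_ne_zero hsnoc0) (C_ne_zero.mpr hcn) hlast

theorem det_hankelPolyMatrix_eq_zero (μ : ℕ → R) {n : ℕ} (hDn : (hankel μ n).det = 0)
    (hDn1 : (hankel μ (n + 1)).det = 0) : (hankelPolyMatrix μ n).det = 0 := by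
  obtain ⟨c, hc0, hc⟩ := exists_mulVec_eq_zero_iff.mpr hDn1
  by_cases hcn : c (Fin.last n) = 0
  · exact det_hankelPolyMatrix_eq_zero_of_mulVec_eq_zero_of_last_eq_zero μ hc0 hc hcn
  · obtain ⟨d, hd0, hd⟩ := exists_mulVec_eq_zero_iff.mpr hDn
    exact det_hankelPolyMatrix_eq_zero_of_mulVec_eq_zero_of_last_ne_zero μ hc hcn hd0 hd

end Hankel

theorem det_polynomial_eq_zero_of_hankel_dets_eq_zero_general
    (μ : ℕ → ℂ) (n : ℕ)
    (hDn : (Matrix.of fun i j : Fin n => μ ((i : ℕ) + (j : ℕ))).det = 0)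
    (hDn1 : (Matrix.of fun i j : Fin (n + 1) => μ ((i : ℕ) + (j : ℕ))).det = 0) :
    (Matrix.of fun i j : Fin (n + 1) =>
      if (i : ℕ) < n then (C (μ ((i : ℕ) + (j : ℕ))) : Polynomial ℂ)
      else X ^ (j : ℕ)).det = 0 :=
  det_hankelPolyMatrix_eq_zero μ hDn hDn1

/-- If both Hankel determinants `D_{n,0}` and `D_{n+1,0}` of the moments
vanish, then the determinantal polynomial `P_n` (with last row `1, z, …, zⁿ`) is the
identically zero polynomial. -/
theorem det_polynomial_eq_zero_of_hankel_dets_eq_zero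
    (μ : ℕ → ℂ) (n : ℕ) (hn : 1 ≤ n)
    (hDn : (Matrix.of fun i j : Fin n => μ ((i : ℕ) + (j : ℕ))).det = 0)
    (hDn1 : (Matrix.of fun i j : Fin (n + 1) => μ ((i : ℕ) + (j : ℕ))).det = 0) :
    (Matrix.of fun i j : Fin (n + 1) =>
      if (i : ℕ) < n then (C (μ ((i : ℕ) + (j : ℕ))) : Polynomial ℂ)
      else X ^ (j : ℕ)).det = 0 :=
  det_polynomial_eq_zero_of_hankel_dets_eq_zero_general μ n hDn hDn1
end

section
/- Let μ : ℕ → ℂ be a sequence of moments and n ≥ 1. If D_{n,0} = det(μ_{i+j})_{0≤i,j≤n−1} = 0 and D_{n+1,0} = det(μ_{i+j})_{0≤i,j≤n} = 0, then D_{n+1,k} = 0 for every k ≥ 0, where D_{n+1,k} is the determinant of the (n+1)×(n+1) matrix whose rows with index 0 ≤ i ≤ n−1 are (μ_i, μ_{i+1}, …, μ_{i+n}) and whose last row is (μ_{n+k}, μ_{n+k+1}, …, μ_{2n+k}). -/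
/-!
The first `n` rows of every `H_{n+1,k}` are the rows of the `n × (n+1)` Hankel matrix
`A = (μ_{i+j})`, so it suffices that these are linearly dependent. If they were independent,
`ker A` would be a line. It contains `(c, 0)` for a nonzero kernel vector `c` of `(μ_{i+j})_{i,j<n}`,
and also a nonzero kernel vector of `H_{n+1,0}`; so `(c, 0)` is a multiple of the latter and is
killed by the last row of `H_{n+1,0}` as well. That extra relation puts the shifted vector
`(0, c)` into `ker A`, but `(0, c)` is never a multiple of `(c, 0)`.
-/

open Matrix Module Submodule

namespace Matrix

variable {R : Type*} {m : Type*}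

lemma mulVec_snoc_zero [NonUnitalNonAssocSemiring R] {n : ℕ} (M : Matrix m (Fin (n + 1)) R)
    (c : Fin n → R) : M *ᵥ Fin.snoc c 0 = M.submatrix id Fin.castSucc *ᵥ c := by
  ext i
  simp [mulVec, dotProduct, Fin.sum_univ_castSucc]

lemma mulVec_cons_zero [NonUnitalNonAssocSemiring R] {n : ℕ} (M : Matrix m (Fin (n + 1)) R)
    (c : Fin n → R) : M *ᵥ Fin.cons 0 c = M.submatrix id Fin.succ *ᵥ c := by
  ext i
  simp [mulVec, dotProduct, Fin.sum_univ_succ]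

lemma submatrix_id_mulVec [NonUnitalNonAssocSemiring R] {l n : Type*} [Fintype n]
    (M : Matrix m n R) (r : l → m) (v : n → R) : M.submatrix r id *ᵥ v = (M *ᵥ v) ∘ r :=
  rfl

lemma finrank_ker_mulVecLin_add_card_of_linearIndependent {K n : Type*} [Field K] [Fintype m]
    [Fintype n] {A : Matrix m n K} (hA : LinearIndependent K A.row) :
    finrank K (LinearMap.ker A.mulVecLin) + Fintype.card m = Fintype.card n := by
  rw [← hA.rank_matrix, add_comm, Matrix.rank, LinearMap.finrank_range_add_finrank_ker,
    finrank_fintype_fun_eq_card]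

end Matrix

lemma Fin.eq_zero_of_cons_zero_eq_smul_snoc_zero {R : Type*} [MulZeroClass R] {n : ℕ}
    {c : Fin n → R} {a : R} (h : (Fin.cons 0 c : Fin (n + 1) → R) = a • Fin.snoc c 0) :
    c = 0 := by
  cases n with
  | zero => exact Subsingleton.elim _ _
  | succ n =>
    funext i
    induction i using Fin.reverseInduction with
    | last => simpa using congrFun h (Fin.last _)
    | cast i hi =>
      have := congrFun h i.castSucc.succ
      rw [Fin.cons_succ, Pi.smul_apply, Fin.succ_castSucc, Fin.snoc_castSucc, hi] at this
      simpa using this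

def hankelMatrix {R : Type*} (μ : ℕ → R) (m p : ℕ) : Matrix (Fin m) (Fin p) R :=
  of fun i j => μ (i + j)

section Hankel

variable {R : Type*} (μ : ℕ → R) (m p : ℕ)

lemma hankelMatrix_submatrix_castSucc_id :
    (hankelMatrix μ (m + 1) p).submatrix Fin.castSucc id = hankelMatrix μ m p :=
  rfl

lemma hankelMatrix_submatrix_id_castSucc :
    (hankelMatrix μ m (p + 1)).submatrix id Fin.castSucc = hankelMatrix μ m p :=
  rfl

lemma hankelMatrix_submatrix_id_succ :
    (hankelMatrix μ m (p + 1)).submatrix id Fin.succ =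
      (hankelMatrix μ (m + 1) p).submatrix Fin.succ id := by
  ext i j
  simp only [hankelMatrix, submatrix_apply, of_apply, id, Fin.val_succ]
  ring_nf

end Hankel

theorem not_linearIndependent_hankelMatrix_rows {K : Type*} [Field K] {μ : ℕ → K} {n : ℕ}
    (hDn : (hankelMatrix μ n n).det = 0) (hDn1 : (hankelMatrix μ (n + 1) (n + 1)).det = 0) :
    ¬ LinearIndependent K (hankelMatrix μ n (n + 1)).row := by
  intro hrows
  set W := LinearMap.ker (hankelMatrix μ n (n + 1)).mulVecLin
  have hW : finrank K W = 1 := by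
    have := finrank_ker_mulVecLin_add_card_of_linearIndependent hrows
    simp only [Fintype.card_fin] at this
    exact Nat.add_right_cancel (this.trans (add_comm n 1))
  obtain ⟨c, hc0, hc⟩ := exists_mulVec_eq_zero_iff.mpr hDn
  obtain ⟨v, hv0, hv⟩ := exists_mulVec_eq_zero_iff.mpr hDn1
  have hcW : Fin.snoc c 0 ∈ W := by
    rw [LinearMap.mem_ker, mulVecLin_apply, mulVec_snoc_zero, hankelMatrix_submatrix_id_castSucc,
      hc]
  have hvW : v ∈ W := by
    rw [LinearMap.mem_ker, mulVecLin_apply, ← hankelMatrix_submatrix_castSucc_id,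
      submatrix_id_mulVec, hv]
    rfl
  obtain ⟨b, hb⟩ := mem_span_singleton.mp <|
    eq_span_singleton_of_mem_of_finrank_eq_one hW hvW hv0 ▸ hcW
  have hc_tall : hankelMatrix μ (n + 1) n *ᵥ c = 0 := by
    rw [← hankelMatrix_submatrix_id_castSucc, ← mulVec_snoc_zero, ← hb, mulVec_smul, hv,
      smul_zero]
  have hshiftW : Fin.cons 0 c ∈ W := by
    rw [LinearMap.mem_ker, mulVecLin_apply, mulVec_cons_zero, hankelMatrix_submatrix_id_succ,
      submatrix_id_mulVec, hc_tall]
    rfl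
  have hsnoc0 : (Fin.snoc c 0 : Fin (n + 1) → K) ≠ 0 := by
    refine fun h => hc0 (funext fun i => ?_)
    simpa using congrFun h i.castSucc
  obtain ⟨a, ha⟩ := mem_span_singleton.mp <|
    eq_span_singleton_of_mem_of_finrank_eq_one hW hcW hsnoc0 ▸ hshiftW
  exact hc0 (Fin.eq_zero_of_cons_zero_eq_smul_snoc_zero ha.symm)

theorem shifted_hankel_dets_eq_zero_general
    (μ : ℕ → ℂ) (n : ℕ)
    (hDn : (Matrix.of fun i j : Fin n => μ ((i : ℕ) + (j : ℕ))).det = 0)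
    (hDn1 : (Matrix.of fun i j : Fin (n + 1) => μ ((i : ℕ) + (j : ℕ))).det = 0) :
    ∀ k : ℕ,
      (Matrix.of fun i j : Fin (n + 1) =>
        if (i : ℕ) < n then μ ((i : ℕ) + (j : ℕ)) else μ (n + k + (j : ℕ))).det = 0 := by
  intro k
  refine det_eq_zero_of_not_linearIndependent_rows fun hrows => ?_
  have hinit : (hankelMatrix μ n (n + 1)).row = fun i => (Matrix.of fun i j : Fin (n + 1) =>
      if (i : ℕ) < n then μ ((i : ℕ) + (j : ℕ)) else μ (n + k + (j : ℕ))) i.castSucc := by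
    ext i j
    simp [hankelMatrix, row]
  refine not_linearIndependent_hankelMatrix_rows hDn hDn1 ?_
  rw [hinit]
  exact hrows.comp Fin.castSucc (Fin.castSucc_injective n)

/-- If the Hankel determinants `D_{n,0}` and `D_{n+1,0}` both vanish,
then `D_{n+1,k} = 0` for every `k ≥ 0`, where `D_{n+1,k}` is the determinant of the
`(n+1)×(n+1)` matrix with rows `(μ_i, …, μ_{i+n})` for `i < n` and last row
`(μ_{n+k}, …, μ_{2n+k})`. -/
theorem shifted_hankel_dets_eq_zero
    (μ : ℕ → ℂ) (n : ℕ) (hn : 1 ≤ n)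
    (hDn : (Matrix.of fun i j : Fin n => μ ((i : ℕ) + (j : ℕ))).det = 0)
    (hDn1 : (Matrix.of fun i j : Fin (n + 1) => μ ((i : ℕ) + (j : ℕ))).det = 0) :
    ∀ k : ℕ,
      (Matrix.of fun i j : Fin (n + 1) =>
        if (i : ℕ) < n then μ ((i : ℕ) + (j : ℕ)) else μ (n + k + (j : ℕ))).det = 0 :=
  shifted_hankel_dets_eq_zero_general μ n hDn hDn1
end

section
/- Let R be a commutative ring and M an n×n matrix over R with n ≥ 2. Let a < b be two row indices and c < d be two column indices. Then det M · det M^{{a,b};{c,d}} = det M^{{a};{c}} · det M^{{b};{d}} − det M^{{b};{c}} · det M^{{a};{d}}, where M^{J;K} denotes the square submatrix of M obtained by deleting the rows with indices in J and the columns with indices in K (the Desnanot–Jacobi identity). -/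
/-!
Let `B` be the identity matrix with columns `c, d` replaced by the columns `a, b` of `adj M`.
Then `det B` is the `2 × 2` minor of `adj M` on rows `c, d` and columns `a, b`, while `M * B` is
`M` with those columns replaced by `det M • e_a` and `det M • e_b`; expanding along these two unit
columns gives `det (M * B) = (det M)² · (±det M^{{a,b};{c,d}})`. Hence `det M` times the identity
holds; over the generic matrix with entries in `ℤ[X_ij]` the factor `det M` is not a zero divisor
and can be cancelled, and the identity specializes to any commutative ring. Each adjugate entry is
a signed minor, and all signs agree up to the unit `(-1)^(a+b+c+d)`.
-/

namespace Matrix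

variable {n R : Type*} [Fintype n] [DecidableEq n] [CommRing R]

theorem det_updateCol_updateCol_one {c d : n} (hcd : c ≠ d) (v w : n → R) :
    (((1 : Matrix n n R).updateCol c v).updateCol d w).det = v c * w d - v d * w c := by
  -- a rank-two perturbation `1 + U * V` of the identity, so Weinstein–Aronszajn applies
  let U : Matrix n (Fin 2) R := of fun i k => ![v, w] k i - (1 : Matrix n n R) i (![c, d] k)
  let V : Matrix (Fin 2) n R := (1 : Matrix n n R).submatrix ![c, d] id
  have hUV : ((1 : Matrix n n R).updateCol c v).updateCol d w = 1 + U * V := by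
    ext i j
    have hUV_apply : (U * V) i j = (v i - (1 : Matrix n n R) i c) * (1 : Matrix n n R) c j +
        (w i - (1 : Matrix n n R) i d) * (1 : Matrix n n R) d j := by
      simp only [U, V, mul_apply, Fin.sum_univ_two, of_apply, submatrix_apply]
      rfl
    rw [add_apply, hUV_apply, updateCol_apply, updateCol_apply]
    by_cases hjd : j = d
    · simp [one_apply, hjd, hcd]
    by_cases hjc : j = c
    · simp [one_apply, hjc, hcd, Ne.symm hcd]
    · simp [one_apply, hjd, hjc, Ne.symm hjc, Ne.symm hjd]
  have hVU : V * U = U.submatrix ![c, d] id := by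
    rw [← Matrix.one_mul U, submatrix_mul _ _ _ _ _ Function.bijective_id, submatrix_id_id,
      Matrix.one_mul]
  rw [hUV, det_one_add_mul_comm, hVU, det_fin_two]
  simp only [U, add_apply, submatrix_apply, of_apply, id]
  simp [one_apply, hcd, Ne.symm hcd, mul_comm]

theorem mulVec_adjugate_col (M : Matrix n n R) (a : n) :
    M *ᵥ (adjugate M).col a = det M • Pi.single a 1 := by
  rw [← mulVec_single_one, mulVec_mulVec, mul_adjugate, smul_mulVec, one_mulVec]

theorem det_mul_adjugate_minor_two (M : Matrix n n R) {c d : n} (hcd : c ≠ d) (a b : n) :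
    det M * (adjugate M c a * adjugate M d b - adjugate M d a * adjugate M c b) =
      det M * (det M * det ((M.updateCol c (Pi.single a 1)).updateCol d (Pi.single b 1))) := by
  let B := ((1 : Matrix n n R).updateCol c ((adjugate M).col a)).updateCol d ((adjugate M).col b)
  have hMB : M * B = (M.updateCol c (det M • Pi.single a 1)).updateCol d
      (det M • Pi.single b 1) := by
    rw [mul_updateCol, mul_updateCol, Matrix.mul_one, mulVec_adjugate_col, mulVec_adjugate_col]
  calc det M * (adjugate M c a * adjugate M d b - adjugate M d a * adjugate M c b)
      = det (M * B) := by rw [det_mul, det_updateCol_updateCol_one hcd]; simp only [col_apply]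
    _ = _ := by
      rw [hMB, det_updateCol_smul, updateCol_comm _ hcd, det_updateCol_smul,
        updateCol_comm _ hcd.symm]

theorem adjugate_minor_two (M : Matrix n n R) {c d : n} (hcd : c ≠ d) (a b : n) :
    adjugate M c a * adjugate M d b - adjugate M d a * adjugate M c b =
      det M * det ((M.updateCol c (Pi.single a 1)).updateCol d (Pi.single b 1)) := by
  let f := MvPolynomial.aeval (R := ℤ) fun p : n × n => M p.1 p.2
  have hX : f.mapMatrix (mvPolynomialX n n ℤ) = M := mvPolynomialX_mapMatrix_aeval ℤ M
  have hadj (i j : n) : f (adjugate (mvPolynomialX n n ℤ) i j) = adjugate M i j := by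
    rw [← hX, ← AlgHom.map_adjugate]; rfl
  have hsingle (i : n) : f ∘ Pi.single i 1 = Pi.single i 1 := by
    ext j; simp [Pi.single_apply, apply_ite f]
  have generic := mul_left_cancel₀ (det_mvPolynomialX_ne_zero n ℤ)
    (det_mul_adjugate_minor_two (mvPolynomialX n n ℤ) hcd a b)
  have := congrArg f generic
  rw [map_sub, map_mul, map_mul, map_mul, hadj, hadj, hadj, hadj, AlgHom.map_det,
    AlgHom.map_det] at this
  simp only [AlgHom.mapMatrix_apply, map_updateCol, hsingle] at this
  rwa [← AlgHom.mapMatrix_apply, hX] at this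

theorem submatrix_updateCol_single {l m o α : Type*} [DecidableEq l] [DecidableEq m]
    [DecidableEq o] [Zero α] (N : Matrix l m α) {f : o → l} {g : o → m} (hf : f.Injective)
    (hg : g.Injective) (i j : o) (x : α) :
    (N.updateCol (g j) (Pi.single (f i) x)).submatrix f g =
      (N.submatrix f g).updateCol j (Pi.single i x) := by
  ext p q
  simp [updateCol_apply, Pi.single_apply, hf.eq_iff, hg.eq_iff]

theorem det_updateCol_single_fin_succ {k : ℕ} (N : Matrix (Fin (k + 1)) (Fin (k + 1)) R)
    (i j : Fin (k + 1)) :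
    (N.updateCol j (Pi.single i 1)).det =
      (-1) ^ (i + j : ℕ) * (N.submatrix i.succAbove j.succAbove).det := by
  rw [← det_transpose, ← updateRow_transpose, ← adjugate_apply,
    adjugate_fin_succ_eq_det_submatrix, ← transpose_submatrix, det_transpose, add_comm (j : ℕ)]

theorem det_updateCol_single_updateCol_single_fin {m : ℕ}
    (N : Matrix (Fin (m + 2)) (Fin (m + 2)) R) {a b c d : Fin (m + 2)} {a' c' : Fin (m + 1)}
    (ha : b.succAbove a' = a) (hc : d.succAbove c' = c) :
    ((N.updateCol c (Pi.single a 1)).updateCol d (Pi.single b 1)).det =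
      (-1) ^ (b + d : ℕ) * (-1) ^ (a' + c' : ℕ) *
        (N.submatrix (b.succAbove ∘ a'.succAbove) (d.succAbove ∘ c'.succAbove)).det := by
  rw [det_updateCol_single_fin_succ, ← ha, ← hc,
    submatrix_updateCol_single _ Fin.succAbove_right_injective Fin.succAbove_right_injective,
    det_updateCol_single_fin_succ, submatrix_submatrix, mul_assoc]

end Matrix

open Matrix

/-- Desnanot–Jacobi identity: for an `n×n` matrix `M` (`n ≥ 2`,
here `n = m + 2`) over a commutative ring, two row indices `a < b` and two column
indices `c < d`:
`det M · det M^{{a,b};{c,d}} = det M^{{a};{c}}·det M^{{b};{d}} − det M^{{b};{c}}·det M^{{a};{d}}`,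
where deleting the rows `a < b` (resp. columns `c < d`) is realized by the strictly
monotone embedding `Fin m → Fin (m+2)` given by `b.succAbove ∘ a'.succAbove`
(with `a'` the copy of `a` in `Fin (m+1)`), whose image misses exactly `{a, b}`. -/
theorem desnanot_jacobi
    (R : Type*) [CommRing R] (m : ℕ)
    (M : Matrix (Fin (m + 2)) (Fin (m + 2)) R)
    (a b : Fin (m + 2)) (hab : a < b)
    (c d : Fin (m + 2)) (hcd : c < d) :
    M.det *
      (M.submatrix
        (b.succAbove ∘ (⟨(a : ℕ), by
          have h1 := Fin.lt_iff_val_lt_val.mp hab; have h2 := b.isLt; omega⟩ :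
            Fin (m + 1)).succAbove)
        (d.succAbove ∘ (⟨(c : ℕ), by
          have h1 := Fin.lt_iff_val_lt_val.mp hcd; have h2 := d.isLt; omega⟩ :
            Fin (m + 1)).succAbove)).det =
    (M.submatrix a.succAbove c.succAbove).det * (M.submatrix b.succAbove d.succAbove).det -
      (M.submatrix b.succAbove c.succAbove).det * (M.submatrix a.succAbove d.succAbove).det := by
  have jacobi := adjugate_minor_two M hcd.ne a b
  have ha : b.succAbove ⟨a, Fin.val_lt_last (hab.trans_le b.le_last).ne⟩ = a :=
    Fin.succAbove_of_castSucc_lt _ _ hab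
  have hc : d.succAbove ⟨c, Fin.val_lt_last (hcd.trans_le d.le_last).ne⟩ = c :=
    Fin.succAbove_of_castSucc_lt _ _ hcd
  rw [det_updateCol_single_updateCol_single_fin M ha hc] at jacobi
  simp only [adjugate_fin_succ_eq_det_submatrix] at jacobi
  have hsign : IsUnit ((-1 : R) ^ (a + b + c + d : ℕ)) := isUnit_one.neg.pow _
  rw [← hsign.mul_right_inj]
  linear_combination -jacobi
end

section
/- The function Φ(λ) := ∫_ℝ e^{λx − x⁴/2} dx is well defined and infinitely differentiable for λ ∈ ℝ, and it satisfies the third-order differential equation 2·Φ'''(λ) = λ·Φ(λ) for every λ ∈ ℝ. -/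
/-!
Every polynomial moment `xⁿ e^{λx − x⁴/2}` is dominated, locally uniformly in `λ`, by an
integrable function, so `Φ` may be differentiated under the integral sign arbitrarily often and
`Φ⁽ⁿ⁾(λ) = ∫ xⁿ e^{λx − x⁴/2} dx`. The ODE is then integration by parts: the derivative in `x`
of `e^{λx − x⁴/2}` is `(λ − 2x³) e^{λx − x⁴/2}`, whose integral vanishes, i.e. `λ Φ = 2 Φ'''`.
-/

open MeasureTheory Real Filter

noncomputable def freudMoment (n : ℕ) (l : ℝ) : ℝ := ∫ x : ℝ, x ^ n * exp (l * x - x ^ 4 / 2)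

lemma exp_mul_abs_sub_pow_four_le (c x : ℝ) :
    exp (c * |x| - x ^ 4 / 2) ≤ exp (|c| + (|c| / 2 + 1) ^ 2 / 2) * exp (-x ^ 2) := by
  rw [← exp_add, exp_le_exp]
  have hc : c * |x| ≤ |c| * |x| := mul_le_mul_of_nonneg_right (le_abs_self c) (abs_nonneg x)
  have hx : |x| ^ 2 = x ^ 2 := sq_abs x
  nlinarith [sq_nonneg (|x| - 1), sq_nonneg (x ^ 2 - (|c| / 2 + 1)), abs_nonneg c, abs_nonneg x]

lemma integrable_exp_mul_abs_sub_pow_four (c : ℝ) :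
    Integrable fun x : ℝ => exp (c * |x| - x ^ 4 / 2) := by
  refine ((integrable_exp_neg_mul_sq one_pos).const_mul
    (exp (|c| + (|c| / 2 + 1) ^ 2 / 2))).mono' (by fun_prop) (ae_of_all _ fun x => ?_)
  rw [norm_of_nonneg (exp_pos _).le]
  simpa using exp_mul_abs_sub_pow_four_le c x

lemma abs_pow_mul_exp_le {l b : ℝ} (hl : |l| ≤ b) (n : ℕ) (x : ℝ) :
    |x ^ n * exp (l * x - x ^ 4 / 2)| ≤ exp ((n + b) * |x| - x ^ 4 / 2) := by
  rw [abs_mul, abs_of_pos (exp_pos _), abs_pow]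
  have hpow : |x| ^ n ≤ exp (n * |x|) := by
    rw [exp_nat_mul]
    exact pow_le_pow_left₀ (abs_nonneg x) (by linarith [add_one_le_exp |x|]) n
  have hexp : exp (l * x - x ^ 4 / 2) ≤ exp (b * |x| - x ^ 4 / 2) := by
    have : l * x ≤ |l| * |x| := (le_abs_self _).trans (abs_mul l x).le
    rw [exp_le_exp]
    nlinarith [abs_nonneg x]
  calc |x| ^ n * exp (l * x - x ^ 4 / 2)
      ≤ exp (n * |x|) * exp (b * |x| - x ^ 4 / 2) :=
        mul_le_mul hpow hexp (exp_pos _).le (exp_pos _).le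
    _ = exp ((n + b) * |x| - x ^ 4 / 2) := by rw [← exp_add]; ring_nf

lemma integrable_pow_mul_exp_sub_pow_four (n : ℕ) (l : ℝ) :
    Integrable fun x : ℝ => x ^ n * exp (l * x - x ^ 4 / 2) :=
  (integrable_exp_mul_abs_sub_pow_four (n + |l|)).mono' (by fun_prop)
    (ae_of_all _ (abs_pow_mul_exp_le le_rfl n))

lemma integrable_exp_sub_pow_four (l : ℝ) :
    Integrable fun x : ℝ => exp (l * x - x ^ 4 / 2) := by
  simpa using integrable_pow_mul_exp_sub_pow_four 0 l

lemma hasDerivAt_pow_mul_exp_sub_pow_four (n : ℕ) (x l : ℝ) :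
    HasDerivAt (fun l : ℝ => x ^ n * exp (l * x - x ^ 4 / 2))
      (x ^ (n + 1) * exp (l * x - x ^ 4 / 2)) l :=
  ((((hasDerivAt_mul_const x).sub_const (x ^ 4 / 2)).exp).const_mul (x ^ n)).congr_deriv
    (by ring)

lemma hasDerivAt_freudMoment (n : ℕ) (l : ℝ) :
    HasDerivAt (freudMoment n) (freudMoment (n + 1) l) l := by
  have hball (l' : ℝ) (hl' : l' ∈ Metric.ball l 1) : |l'| ≤ |l| + 1 := by
    have := abs_sub_abs_le_abs_sub l' l
    rw [Metric.mem_ball, Real.dist_eq] at hl'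
    linarith
  exact (hasDerivAt_integral_of_dominated_loc_of_deriv_le (Metric.ball_mem_nhds l one_pos)
    (Eventually.of_forall fun _ => by fun_prop) (integrable_pow_mul_exp_sub_pow_four n l)
    (by fun_prop)
    (ae_of_all _ fun x l' hl' => abs_pow_mul_exp_le (hball l' hl') (n + 1) x)
    (integrable_exp_mul_abs_sub_pow_four _)
    (ae_of_all _ fun x l' _ => hasDerivAt_pow_mul_exp_sub_pow_four n x l')).2

lemma deriv_freudMoment (n : ℕ) : deriv (freudMoment n) = freudMoment (n + 1) :=
  funext fun l => (hasDerivAt_freudMoment n l).deriv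

lemma iteratedDeriv_freudMoment (k n : ℕ) :
    iteratedDeriv k (freudMoment n) = freudMoment (n + k) := by
  induction k generalizing n with
  | zero => rfl
  | succ k ih => rw [iteratedDeriv_succ', deriv_freudMoment, ih, add_right_comm, add_assoc]

lemma contDiff_freudMoment (n : ℕ) : ContDiff ℝ (⊤ : ℕ∞) (freudMoment n) :=
  contDiff_of_differentiable_iteratedDeriv fun k _ => by
    rw [iteratedDeriv_freudMoment]
    exact fun l => (hasDerivAt_freudMoment _ l).differentiableAt

lemma freudMoment_zero : freudMoment 0 = fun l : ℝ => ∫ x : ℝ, exp (l * x - x ^ 4 / 2) := by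
  funext l
  simp [freudMoment]

lemma two_mul_freudMoment_three (l : ℝ) :
    2 * freudMoment 3 l = l * freudMoment 0 l := by
  have hderiv (x : ℝ) : HasDerivAt (fun x => exp (l * x - x ^ 4 / 2))
      (l * exp (l * x - x ^ 4 / 2) - 2 * (x ^ 3 * exp (l * x - x ^ 4 / 2))) x := by
    have hexponent : HasDerivAt (fun x => l * x - x ^ 4 / 2) (l - 2 * x ^ 3) x :=
      (((hasDerivAt_id x).const_mul l).sub ((hasDerivAt_pow 4 x).div_const 2)).congr_deriv
        (by norm_num; ring)
    refine hexponent.exp.congr_deriv ?_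
    ring
  have hweight := integrable_exp_sub_pow_four l
  have hcubic := (integrable_pow_mul_exp_sub_pow_four 3 l).const_mul 2
  have hibp := integral_eq_zero_of_hasDerivAt_of_integrable hderiv
    ((hweight.const_mul l).sub hcubic) hweight
  rw [integral_sub (hweight.const_mul l) hcubic, integral_const_mul, integral_const_mul,
    sub_eq_zero] at hibp
  rw [freudMoment_zero]
  exact hibp.symm

/-- The generating function `Φ(λ) = ∫_ℝ e^{λx − x⁴/2} dx` of the
moments of the Freud weight is well defined (the integrand is integrable for every
`λ`), infinitely differentiable, and satisfies `2·Φ'''(λ) = λ·Φ(λ)` for all `λ`. -/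
theorem freud_generating_function_ode :
    (∀ lam : ℝ, Integrable (fun x : ℝ => Real.exp (lam * x - x ^ 4 / 2))) ∧
    (∀ n : ℕ, ContDiff ℝ n (fun lam : ℝ => ∫ x : ℝ, Real.exp (lam * x - x ^ 4 / 2))) ∧
    (∀ lam : ℝ,
      2 * iteratedDeriv 3 (fun l : ℝ => ∫ x : ℝ, Real.exp (l * x - x ^ 4 / 2)) lam =
        lam * ∫ x : ℝ, Real.exp (lam * x - x ^ 4 / 2)) := by
  refine ⟨integrable_exp_sub_pow_four, fun n => ?_, fun lam => ?_⟩
  · rw [← freudMoment_zero]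
    exact (contDiff_freudMoment 0).of_le (by exact_mod_cast le_top)
  · rw [← freudMoment_zero, iteratedDeriv_freudMoment, two_mul_freudMoment_three,
      freudMoment_zero]
end

section
/- Let A, B, P be polynomials over ℂ, let U ⊆ ℂ be open with B(z) ≠ 0 on U, and let θ : U → ℂ be analytic with θ'(z) = −(A(z) + B'(z))/B(z) on U. For an analytic function R on U define W_R := −(A + B')·P·R + B·(P'·R − P·R'). If R₊ and R₋ are two analytic functions on U whose difference is R₊ − R₋ = P·e^{θ}, then W_{R₊} = W_{R₋} identically on U. (This is the key computation showing that the Wronskian W of Proposition 3.2 has no jump discontinuities across the contours of integration.) -/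
open Polynomial Filter Topology

/-! `W_R` is linear in the pair `(R, R')`, so `W_{R₊} - W_{R₋} = W_g` with `g = P·e^θ`.
Since `θ' = −(A + B')/B`, we get `B·g' = B·P'·e^θ − (A + B')·g`, and `W_g` cancels to `0`. -/

theorem HasDerivAt.of_eventually_sub_eq {𝕜 F : Type*} [NontriviallyNormedField 𝕜]
    [NormedAddCommGroup F] [NormedSpace 𝕜 F] {f g k : 𝕜 → F} {g' k' : F} {z : 𝕜}
    (hg : HasDerivAt g g' z) (hk : HasDerivAt k k' z) (h : ∀ᶠ w in 𝓝 z, f w - g w = k w) :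
    HasDerivAt f (g' + k') z :=
  (hg.add hk).congr_of_eventuallyEq <| h.mono fun w hw => by simp [← hw]

theorem wronskian_mul_exp_eq_zero {a b p p' e t' : ℂ} (hb : b ≠ 0) (ht' : t' = -(a / b)) :
    -(a * p * (p * e)) + b * (p' * (p * e) - p * (p' * e + p * (e * t'))) = 0 := by
  rw [ht']
  field_simp
  ring

theorem wronskian_no_jump_general
    (A B P : Polynomial ℂ)
    (U : Set ℂ) (hU : IsOpen U) (hB : ∀ z ∈ U, B.eval z ≠ 0)
    (θ : ℂ → ℂ) (hθ : DifferentiableOn ℂ θ U)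
    (hθ' : ∀ z ∈ U, deriv θ z = -((A.eval z + (derivative B).eval z) / B.eval z))
    (Rp Rm : ℂ → ℂ)
    (hRm : DifferentiableOn ℂ Rm U)
    (hjump : ∀ z ∈ U, Rp z - Rm z = P.eval z * Complex.exp (θ z)) :
    ∀ z ∈ U,
      -((A.eval z + (derivative B).eval z) * P.eval z * Rp z) +
          B.eval z * ((derivative P).eval z * Rp z - P.eval z * deriv Rp z) =
        -((A.eval z + (derivative B).eval z) * P.eval z * Rm z) +
          B.eval z * ((derivative P).eval z * Rm z - P.eval z * deriv Rm z) := by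
  intro z hz
  have hUz : U ∈ 𝓝 z := hU.mem_nhds hz
  have hjump_deriv : HasDerivAt (fun w => P.eval w * Complex.exp (θ w))
      ((derivative P).eval z * Complex.exp (θ z)
        + P.eval z * (Complex.exp (θ z) * deriv θ z)) z :=
    (P.hasDerivAt z).mul ((hθ.differentiableAt hUz).hasDerivAt.cexp)
  have hRp_deriv : deriv Rp z = deriv Rm z + ((derivative P).eval z * Complex.exp (θ z)
      + P.eval z * (Complex.exp (θ z) * deriv θ z)) :=
    (((hRm.differentiableAt hUz).hasDerivAt.of_eventually_sub_eq hjump_deriv)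
      (eventually_of_mem hUz hjump)).deriv
  rw [hRp_deriv, eq_add_of_sub_eq' (hjump z hz)]
  linear_combination wronskian_mul_exp_eq_zero (p := P.eval z) (p' := (derivative P).eval z)
    (e := Complex.exp (θ z)) (hB z hz) (hθ' z hz)

/-- With `θ` an analytic antiderivative of `−(A + B')/B` on an open set
`U` where `B ≠ 0`, the expression `W_R = −(A + B')·P·R + B·(P'·R − P·R')` is the same
for two analytic functions `R₊, R₋` on `U` whose difference is `R₊ − R₋ = P·e^θ`:
the Wronskian has no jump discontinuity across the contours of integration. -/
theorem wronskian_no_jump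
    (A B P : Polynomial ℂ)
    (U : Set ℂ) (hU : IsOpen U) (hB : ∀ z ∈ U, B.eval z ≠ 0)
    (θ : ℂ → ℂ) (hθ : DifferentiableOn ℂ θ U)
    (hθ' : ∀ z ∈ U, deriv θ z = -((A.eval z + (derivative B).eval z) / B.eval z))
    (Rp Rm : ℂ → ℂ)
    (hRp : DifferentiableOn ℂ Rp U) (hRm : DifferentiableOn ℂ Rm U)
    (hjump : ∀ z ∈ U, Rp z - Rm z = P.eval z * Complex.exp (θ z)) :
    ∀ z ∈ U,
      -((A.eval z + (derivative B).eval z) * P.eval z * Rp z) +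
          B.eval z * ((derivative P).eval z * Rp z - P.eval z * deriv Rp z) =
        -((A.eval z + (derivative B).eval z) * P.eval z * Rm z) +
          B.eval z * ((derivative P).eval z * Rm z - P.eval z * deriv Rm z) :=
  wronskian_no_jump_general A B P U hU hB θ hθ hθ' Rp Rm hRm hjump
end
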